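/- Let G be an additive commutative group and let c : Fin r → G be a finite family of elements, with N the additive submonoid of G generated by the c i. Call an element v of a subset V ⊆ G a minimal element of V (with respect to the preorder induced by N) if every w ∈ V with v − w ∈ N satisfies w = v. Then for every subset V of (the underlying set of) N, the set of minimal elements of V is finite. -/

import Mathlib

/-!
Write each element of `N` as `∑ aᵢ • cᵢ` with `a : Fin r → ℕ`. If `v` and `w` are minimal
elements of `V` with coefficient vectors `a ≤ b`, then `w - v = ∑ (bᵢ - aᵢ) • cᵢ ∈ N`, so
minimality of `w` forces `v = w`. Hence the coefficient vectors of the minimal elements form an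
antichain in `ℕ^r`, which is finite by Dickson's lemma.
-/

theorem Set.finite_of_forall_map_le_imp_eq {α β : Type*} [Preorder β] [WellQuasiOrderedLE β]
    {s : Set α} (f : α → β) (h : ∀ x ∈ s, ∀ y ∈ s, f x ≤ f y → x = y) : s.Finite := by
  have hinj : s.InjOn f := fun x hx y hy hxy => h x hx y hy hxy.le
  have hanti : IsAntichain (· ≤ ·) (f '' s) := by
    rintro _ ⟨x, hx, rfl⟩ _ ⟨y, hy, rfl⟩ hne hle
    exact hne (congrArg f (h x hx y hy hle))
  exact .of_finite_image
    (hanti.finite_of_partiallyWellOrderedOn (Set.isPWO_of_wellQuasiOrderedLE _)) hinj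

theorem AddSubmonoid.sum_nsmul_sub_sum_nsmul_mem_closure {G ι : Type*} [AddCommGroup G]
    [Fintype ι] (c : ι → G) {a b : ι → ℕ} (hab : a ≤ b) :
    ∑ i, b i • c i - ∑ i, a i • c i ∈ closure (Set.range c) := by
  refine (mem_closure_range_iff_of_fintype).2 ⟨b - a, ?_⟩
  rw [sub_eq_iff_eq_add, ← Finset.sum_add_distrib]
  refine Finset.sum_congr rfl fun i _ => ?_
  rw [Pi.sub_apply, ← add_nsmul, Nat.sub_add_cancel (hab i)]

/-- A subset `V` of the submonoid `N` generated by a finite family `c : Fin r → G`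
has only finitely many minimal elements with respect to the preorder induced by `N`
(`a ≤ b` iff `b - a ∈ N`). -/
theorem stmt1 {G : Type*} [AddCommGroup G] {r : ℕ} (c : Fin r → G)
    (N : AddSubmonoid G) (hN : N = AddSubmonoid.closure (Set.range c))
    (V : Set G) (hV : V ⊆ (N : Set G)) :
    {v ∈ V | ∀ w ∈ V, v - w ∈ N → w = v}.Finite := by
  subst hN
  choose! a ha using fun v (hv : v ∈ V) =>
    (AddSubmonoid.mem_closure_range_iff_of_fintype).1 (hV hv)
  refine Set.finite_of_forall_map_le_imp_eq a fun v hv w hw hle => hw.2 v hv.1 ?_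
  rw [ha v hv.1, ha w hw.1]
  exact AddSubmonoid.sum_nsmul_sub_sum_nsmul_mem_closure c hle
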